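/- Let Z_1, ..., Z_m, Z_{m+1}, Z_{m+2} be conditionally i.i.d. given W, and let V be a random variable such that each Z_j is conditionally independent of V given W and the full collection is exchangeable given (W,V). Then for each j, I(W; Z_{j+1} | Z_1,...,Z_j, V) ≥ I(W; Z_{j+2} | Z_1,...,Z_{j+1}, V). Consequently I(W; (Z_1,...,Z_m) | V) ≥ m · I(W; Z_{m+1} | Z_1,...,Z_m, V). -/

import Mathlib

open scoped BigOperators

/-- Distribution (pushforward) of a random variable `X` under weights `p`. -/
noncomputable def distOf {Ω α : Type*} [Fintype Ω] [DecidableEq α]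
    (p : Ω → ℝ) (X : Ω → α) (a : α) : ℝ :=
  ∑ ω, if X ω = a then p ω else 0

/-- Shannon entropy of a random variable. -/
noncomputable def entOf {Ω α : Type*} [Fintype Ω] [Fintype α] [DecidableEq α]
    (p : Ω → ℝ) (X : Ω → α) : ℝ :=
  -∑ a, distOf p X a * Real.log (distOf p X a)

/-- Conditional entropy H(Y|X). -/
noncomputable def condEntOf {Ω α β : Type*} [Fintype Ω] [Fintype α] [Fintype β]
    [DecidableEq α] [DecidableEq β] (p : Ω → ℝ) (Y : Ω → β) (X : Ω → α) : ℝ :=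
  entOf p (fun ω => (Y ω, X ω)) - entOf p X

/-- Mutual information I(A;B). -/
noncomputable def miOf {Ω α β : Type*} [Fintype Ω] [Fintype α] [Fintype β]
    [DecidableEq α] [DecidableEq β] (p : Ω → ℝ) (A : Ω → α) (B : Ω → β) : ℝ :=
  entOf p A + entOf p B - entOf p (fun ω => (A ω, B ω))

/-- Conditional mutual information I(A;B|C). -/
noncomputable def cmiOf {Ω α β γ : Type*} [Fintype Ω] [Fintype α] [Fintype β] [Fintype γ]
    [DecidableEq α] [DecidableEq β] [DecidableEq γ]
    (p : Ω → ℝ) (A : Ω → α) (B : Ω → β) (C : Ω → γ) : ℝ :=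
  condEntOf p A C - condEntOf p A (fun ω => (B ω, C ω))

/-- `p` is a probability mass function on the finite sample space. -/
def IsPMF {Ω : Type*} [Fintype Ω] (p : Ω → ℝ) : Prop :=
  (∀ ω, 0 ≤ p ω) ∧ ∑ ω, p ω = 1

/-- A and B are conditionally independent given C. -/
def CondIndep {Ω α β γ : Type*} [Fintype Ω] [DecidableEq α] [DecidableEq β] [DecidableEq γ]
    (p : Ω → ℝ) (A : Ω → α) (B : Ω → β) (C : Ω → γ) : Prop :=
  ∀ a b c, distOf p (fun ω => (A ω, B ω, C ω)) (a, b, c) * distOf p C c =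
    distOf p (fun ω => (A ω, C ω)) (a, c) * distOf p (fun ω => (B ω, C ω)) (b, c)

/-- Equality in distribution. -/
def IdentDist {Ω α : Type*} [Fintype Ω] [DecidableEq α]
    (p : Ω → ℝ) (X Y : Ω → α) : Prop := ∀ a, distOf p X a = distOf p Y a

/-- Bayesian risk: infimum over measurable (automatic here) decision rules of the
expected loss. -/
noncomputable def risk {Ω α 𝒞 𝒜 : Type*} [Fintype Ω]
    (p : Ω → ℝ) (ℓ : 𝒞 → 𝒜 → ℝ) (C : Ω → 𝒞) (A : Ω → α) : ℝ :=
  ⨅ ψ : α → 𝒜, ∑ ω, p ω * ℓ (C ω) (ψ (A ω))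

/-!
Conditional independence of `Z_j` and `(Z_{<j}, V)` given `W` turns `I(W; Z_j | Z_{<j}, V)` into
`H(Z_j | Z_{<j}, V) - H(Z_j | W)`. From `j` to `j + 1` the second entropy does not change, as
`(Z_j, W)` and `(Z_{j+1}, W)` are equidistributed, and the first can only decrease: conditioning
on the longer history reduces entropy, and by exchangeability
`H(Z_{j+1} | Z_{<j}, V) = H(Z_j | Z_{<j}, V)`. The chain rule writes `I(W; Z_{<m} | V)` as the sum
of the `m` terms `I(W; Z_j | Z_{<j}, V)`, `j < m`, each at least `I(W; Z_m | Z_{<m}, V)`.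
-/

open Finset

section Distribution

variable {Ω α β : Type*} [Fintype Ω] [DecidableEq α] {p : Ω → ℝ}

lemma distOf_nonneg (hp : ∀ ω, 0 ≤ p ω) (X : Ω → α) (a : α) : 0 ≤ distOf p X a :=
  sum_nonneg fun ω _ => by split_ifs <;> simp [hp ω]

lemma le_distOf_apply (hp : ∀ ω, 0 ≤ p ω) (X : Ω → α) (ω : Ω) : p ω ≤ distOf p X (X ω) := by
  simpa [distOf] using single_le_sum (f := fun ω' => if X ω' = X ω then p ω' else 0)
    (fun ω' _ => by split_ifs <;> simp [hp ω']) (mem_univ ω)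

lemma distOf_apply_pos (hp : ∀ ω, 0 ≤ p ω) (X : Ω → α) {ω : Ω} (hω : p ω ≠ 0) :
    0 < distOf p X (X ω) :=
  ((hp ω).lt_of_ne' hω).trans_le (le_distOf_apply hp X ω)

lemma sum_distOf_mul [Fintype α] (p : Ω → ℝ) (X : Ω → α) (f : α → ℝ) :
    ∑ a, distOf p X a * f a = ∑ ω, p ω * f (X ω) := by
  simp only [distOf, sum_mul, ite_mul, zero_mul]
  rw [sum_comm]
  simp

lemma sum_distOf [Fintype α] (p : Ω → ℝ) (X : Ω → α) : ∑ a, distOf p X a = ∑ ω, p ω := by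
  simpa using sum_distOf_mul p X fun _ => 1

lemma distOf_comp_of_injective [DecidableEq β] {f : α → β} (hf : f.Injective) (X : Ω → α)
    (a : α) : distOf p (fun ω => f (X ω)) (f a) = distOf p X a := by
  simp only [distOf, hf.eq_iff]

lemma sum_distOf_pair_left [Fintype α] [DecidableEq β] (A : Ω → α) (B : Ω → β) (b : β) :
    ∑ a, distOf p (fun ω => (A ω, B ω)) (a, b) = distOf p B b := by
  simp only [distOf, Prod.mk.injEq]
  rw [sum_comm]
  exact sum_congr rfl fun ω _ => by by_cases h : B ω = b <;> simp [h]

end Distribution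

section Entropy

variable {Ω α β γ : Type*} [Fintype Ω] [Fintype α] [Fintype β] [Fintype γ]
  [DecidableEq α] [DecidableEq β] [DecidableEq γ] {p : Ω → ℝ}

lemma entOf_eq_neg_sum_log (p : Ω → ℝ) (X : Ω → α) :
    entOf p X = -∑ ω, p ω * Real.log (distOf p X (X ω)) := by
  rw [entOf, sum_distOf_mul]

lemma entOf_comp_of_injective {f : α → β} (hf : f.Injective) (X : Ω → α) :
    entOf p (fun ω => f (X ω)) = entOf p X := by
  simp only [entOf_eq_neg_sum_log, distOf_comp_of_injective hf]

lemma IdentDist.entOf_eq {X Y : Ω → α} (h : IdentDist p X Y) : entOf p X = entOf p Y := by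
  simp only [entOf, h _]

lemma IdentDist.condEntOf_eq {Y Y' : Ω → γ} {X : Ω → α}
    (h : IdentDist p (fun ω => (Y ω, X ω)) (fun ω => (Y' ω, X ω))) :
    condEntOf p Y X = condEntOf p Y' X := by
  rw [condEntOf, condEntOf, h.entOf_eq]

lemma condEntOf_comp_of_injective {f : α → β} (hf : f.Injective) (Y : Ω → γ) (X : Ω → α) :
    condEntOf p Y (fun ω => f (X ω)) = condEntOf p Y X := by
  rw [condEntOf, condEntOf, entOf_comp_of_injective hf,
    ← entOf_comp_of_injective (Function.injective_id.prodMap hf) (fun ω => (Y ω, X ω))]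
  rfl

lemma condEntOf_pair_comm (Y : Ω → γ) (X : Ω → α) (X' : Ω → β) :
    condEntOf p Y (fun ω => (X ω, X' ω)) = condEntOf p Y (fun ω => (X' ω, X ω)) :=
  condEntOf_comp_of_injective Prod.swap_injective Y fun ω => (X' ω, X ω)

end Entropy

lemma sum_mul_log_nonneg_of_sum_mul_inv_le {ι : Type*} [Fintype ι] {w x : ι → ℝ}
    (hw : ∀ i, 0 ≤ w i) (hx : ∀ i, w i ≠ 0 → 0 < x i) (hsum : ∑ i, w i * (x i)⁻¹ ≤ ∑ i, w i) :
    0 ≤ ∑ i, w i * Real.log (x i) := by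
  have hterm : ∀ i, w i - w i * (x i)⁻¹ ≤ w i * Real.log (x i) := fun i => by
    rcases eq_or_ne (w i) 0 with h | h
    · simp [h]
    · simpa [mul_sub] using
        mul_le_mul_of_nonneg_left (Real.one_sub_inv_le_log_of_pos (hx i h)) (hw i)
  calc 0 ≤ ∑ i, (w i - w i * (x i)⁻¹) := by rw [sum_sub_distrib]; linarith
    _ ≤ _ := sum_le_sum fun i _ => hterm i

section MutualInformation

variable {Ω α β γ : Type*} [Fintype Ω] [Fintype α] [Fintype β] [Fintype γ]
  [DecidableEq α] [DecidableEq β] [DecidableEq γ] {p : Ω → ℝ}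

lemma cmiOf_comm (p : Ω → ℝ) (A : Ω → α) (B : Ω → β) (C : Ω → γ) :
    cmiOf p A B C = cmiOf p B A C := by
  have hswap : entOf p (fun ω => (B ω, A ω, C ω)) = entOf p (fun ω => (A ω, B ω, C ω)) :=
    entOf_comp_of_injective (f := fun x : α × β × γ => (x.2.1, x.1, x.2.2))
      (fun _ _ h => by simp only [Prod.mk.injEq] at h; exact Prod.ext h.2.1 (Prod.ext h.1 h.2.2))
      (fun ω => (A ω, B ω, C ω))
  simp only [cmiOf, condEntOf, hswap]
  ring

lemma cmiOf_eq_sum_log_div (hp : ∀ ω, 0 ≤ p ω) (A : Ω → α) (B : Ω → β) (C : Ω → γ) :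
    cmiOf p A B C = ∑ ω, p ω * Real.log
      (distOf p (fun ω => (A ω, B ω, C ω)) (A ω, B ω, C ω) * distOf p C (C ω) /
        (distOf p (fun ω => (A ω, C ω)) (A ω, C ω) *
          distOf p (fun ω => (B ω, C ω)) (B ω, C ω))) := by
  simp only [cmiOf, condEntOf, entOf_eq_neg_sum_log, ← sum_sub_distrib, ← sum_neg_distrib]
  refine sum_congr rfl fun ω _ => ?_
  rcases eq_or_ne (p ω) 0 with h | h
  · simp [h]
  have hABC := (distOf_apply_pos hp (fun ω => (A ω, B ω, C ω)) h).ne'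
  have hAC := (distOf_apply_pos hp (fun ω => (A ω, C ω)) h).ne'
  have hBC := (distOf_apply_pos hp (fun ω => (B ω, C ω)) h).ne'
  have hC := (distOf_apply_pos hp C h).ne'
  rw [Real.log_div (mul_ne_zero hABC hC) (mul_ne_zero hAC hBC), Real.log_mul hABC hC,
    Real.log_mul hAC hBC]
  ring

lemma sum_distOf_pair_mul_distOf_pair_div (p : Ω → ℝ) (A : Ω → α) (B : Ω → β) (C : Ω → γ) :
    ∑ x : α × β × γ, distOf p (fun ω => (A ω, C ω)) (x.1, x.2.2) *
      distOf p (fun ω => (B ω, C ω)) (x.2.1, x.2.2) / distOf p C x.2.2 = ∑ ω, p ω := by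
  calc _ = ∑ c, (∑ a, distOf p (fun ω => (A ω, C ω)) (a, c)) *
        (∑ b, distOf p (fun ω => (B ω, C ω)) (b, c)) / distOf p C c := by
        simp only [Fintype.sum_prod_type_right, sum_mul_sum, sum_div]
        exact sum_congr rfl fun c _ => sum_comm
    _ = ∑ ω, p ω := by simp only [sum_distOf_pair_left, mul_self_div_self, sum_distOf]

lemma sum_mul_distOf_ratio_le (hp : ∀ ω, 0 ≤ p ω) (A : Ω → α) (B : Ω → β) (C : Ω → γ) :
    ∑ ω, p ω * (distOf p (fun ω => (A ω, C ω)) (A ω, C ω) *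
        distOf p (fun ω => (B ω, C ω)) (B ω, C ω) /
        (distOf p (fun ω => (A ω, B ω, C ω)) (A ω, B ω, C ω) * distOf p C (C ω))) ≤
      ∑ ω, p ω := by
  have hcancel (d y z : ℝ) (hyz : 0 ≤ y / z) : d * (y / (d * z)) ≤ y / z := by
    rcases eq_or_ne d 0 with h | h
    · simpa [h] using hyz
    · rw [← mul_div_assoc, mul_div_mul_left _ _ h]
  rw [← sum_distOf_mul p (fun ω => (A ω, B ω, C ω)) fun x =>
      distOf p (fun ω => (A ω, C ω)) (x.1, x.2.2) * distOf p (fun ω => (B ω, C ω)) (x.2.1, x.2.2) /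
        (distOf p (fun ω => (A ω, B ω, C ω)) x * distOf p C x.2.2),
    ← sum_distOf_pair_mul_distOf_pair_div p A B C]
  exact sum_le_sum fun x _ => hcancel _ _ _ <| div_nonneg
    (mul_nonneg (distOf_nonneg hp _ _) (distOf_nonneg hp _ _)) (distOf_nonneg hp _ _)

lemma cmiOf_nonneg (hp : ∀ ω, 0 ≤ p ω) (A : Ω → α) (B : Ω → β) (C : Ω → γ) :
    0 ≤ cmiOf p A B C := by
  rw [cmiOf_eq_sum_log_div hp]
  refine sum_mul_log_nonneg_of_sum_mul_inv_le hp (fun ω h => ?_) ?_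
  · have := distOf_apply_pos hp (fun ω => (A ω, B ω, C ω)) h
    have := distOf_apply_pos hp (fun ω => (A ω, C ω)) h
    have := distOf_apply_pos hp (fun ω => (B ω, C ω)) h
    have := distOf_apply_pos hp C h
    positivity
  · simpa only [inv_div] using sum_mul_distOf_ratio_le hp A B C

lemma condEntOf_pair_le (hp : ∀ ω, 0 ≤ p ω) (Y : Ω → α) (X : Ω → β) (C : Ω → γ) :
    condEntOf p Y (fun ω => (X ω, C ω)) ≤ condEntOf p Y C :=
  sub_nonneg.mp (cmiOf_nonneg hp Y X C)

lemma cmiOf_eq_zero_of_condIndep (hp : ∀ ω, 0 ≤ p ω) {A : Ω → α} {B : Ω → β} {C : Ω → γ}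
    (h : CondIndep p A B C) : cmiOf p A B C = 0 := by
  rw [cmiOf_eq_sum_log_div hp]
  refine sum_eq_zero fun ω _ => ?_
  rw [h (A ω) (B ω) (C ω)]
  by_cases h0 : distOf p (fun ω => (A ω, C ω)) (A ω, C ω) *
    distOf p (fun ω => (B ω, C ω)) (B ω, C ω) = 0 <;> simp [h0]

lemma cmiOf_eq_condEntOf_sub_of_condIndep (hp : ∀ ω, 0 ≤ p ω) {W : Ω → α} {Z : Ω → β}
    {C : Ω → γ} (h : CondIndep p Z C W) :
    cmiOf p W Z C = condEntOf p Z C - condEntOf p Z W := by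
  have hW : condEntOf p Z W = condEntOf p Z (fun ω => (W ω, C ω)) := by
    rw [condEntOf_pair_comm]
    exact sub_eq_zero.mp (cmiOf_eq_zero_of_condIndep hp h)
  rw [cmiOf_comm, cmiOf, hW]

end MutualInformation

section Exchangeable

variable {Ω 𝒵 𝒲 γ δ : Type*} [Fintype Ω] [Fintype 𝒵] [Fintype 𝒲] [Fintype γ] [Fintype δ]
  [DecidableEq 𝒵] [DecidableEq 𝒲] [DecidableEq γ] [DecidableEq δ] {p : Ω → ℝ}

lemma cmiOf_le_of_identDist_of_condIndep (hp : ∀ ω, 0 ≤ p ω) {Z Z' : Ω → 𝒵} {W : Ω → 𝒲} {C : Ω → γ}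
    {C' : Ω → δ} {f : 𝒵 × γ → δ} (hf : f.Injective) (hC' : C' = fun ω => f (Z ω, C ω))
    (hexch : IdentDist p (fun ω => (Z ω, C ω)) (fun ω => (Z' ω, C ω)))
    (hid : IdentDist p (fun ω => (Z ω, W ω)) (fun ω => (Z' ω, W ω)))
    (hci : CondIndep p Z C W) (hci' : CondIndep p Z' C' W) :
    cmiOf p W Z' C' ≤ cmiOf p W Z C := by
  calc cmiOf p W Z' C' = condEntOf p Z' C' - condEntOf p Z' W :=
        cmiOf_eq_condEntOf_sub_of_condIndep hp hci'
    _ = condEntOf p Z' (fun ω => (Z ω, C ω)) - condEntOf p Z' W := by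
        rw [hC', condEntOf_comp_of_injective hf]
    _ ≤ condEntOf p Z' C - condEntOf p Z' W := by
        gcongr
        exact condEntOf_pair_le hp Z' Z C
    _ = condEntOf p Z C - condEntOf p Z W := by
        rw [hexch.condEntOf_eq, hid.condEntOf_eq]
    _ = cmiOf p W Z C := (cmiOf_eq_condEntOf_sub_of_condIndep hp hci).symm

lemma cmiOf_eq_condEntOf_sub_of_injective (p : Ω → ℝ) (W : Ω → 𝒲) (Z : Ω → 𝒵) {C : Ω → γ}
    {C' : Ω → δ} {f : 𝒵 × γ → δ} (hf : f.Injective) (hC' : C' = fun ω => f (Z ω, C ω)) :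
    cmiOf p W Z C = condEntOf p W C - condEntOf p W C' := by
  rw [hC', condEntOf_comp_of_injective hf]
  rfl

end Exchangeable

section History

variable {Ω 𝒵 𝒱 : Type*}

def history (Z : ℕ → Ω → 𝒵) (V : Ω → 𝒱) (j : ℕ) (ω : Ω) : (Fin j → 𝒵) × 𝒱 :=
  (fun i => Z i ω, V ω)

def snocHistory {j : ℕ} (x : 𝒵 × (Fin j → 𝒵) × 𝒱) : (Fin (j + 1) → 𝒵) × 𝒱 :=
  (Fin.snoc x.2.1 x.1, x.2.2)

lemma snocHistory_injective {j : ℕ} :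
    (snocHistory : 𝒵 × (Fin j → 𝒵) × 𝒱 → (Fin (j + 1) → 𝒵) × 𝒱).Injective := by
  rintro ⟨z, t, v⟩ ⟨z', t', v'⟩ h
  simp only [snocHistory, Prod.mk.injEq] at h
  obtain ⟨hsnoc, rfl⟩ := h
  obtain ⟨rfl, rfl⟩ := Fin.snoc_injective2 hsnoc
  rfl

lemma history_succ (Z : ℕ → Ω → 𝒵) (V : Ω → 𝒱) (j : ℕ) :
    history Z V (j + 1) = fun ω => snocHistory (Z j ω, history Z V j ω) := by
  funext ω
  refine Prod.ext (funext fun i => ?_) rfl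
  refine Fin.lastCases ?_ (fun k => ?_) i <;> simp [history, snocHistory]

lemma history_zero (Z : ℕ → Ω → 𝒵) (V : Ω → 𝒱) :
    history Z V 0 = fun ω => ((isEmptyElim : Fin 0 → 𝒵), V ω) :=
  funext fun _ => Prod.ext (Subsingleton.elim _ _) rfl

variable [Fintype Ω] [Fintype 𝒵] [Fintype 𝒱] [DecidableEq 𝒵] [DecidableEq 𝒱]
  {𝒲 : Type*} [Fintype 𝒲] [DecidableEq 𝒲]

lemma cmiOf_eq_sum_cmiOf_history (p : Ω → ℝ) (W : Ω → 𝒲) (Z : ℕ → Ω → 𝒵) (V : Ω → 𝒱)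
    (m : ℕ) :
    cmiOf p W (fun ω (i : Fin m) => Z i ω) V =
      ∑ j ∈ range m, cmiOf p W (Z j) (history Z V j) := by
  rw [sum_congr rfl fun j _ => cmiOf_eq_condEntOf_sub_of_injective p W (Z j)
    snocHistory_injective (history_succ Z V j), sum_range_sub', history_zero,
    condEntOf_comp_of_injective (Prod.mk_right_injective _)]
  rfl

end History

/-- for samples Z_0, Z_1, ... conditionally i.i.d. given W, with V
such that each Z_j ⊥ (Z_{<j}, V) | W and the tuples are exchangeable in
distribution, the single-step conditional mutual informations are monotone, and
consequently I(W; Z_{<m} | V) ≥ m · I(W; Z_m | Z_{<m}, V). -/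
theorem cmi_step_monotone_and_bound
    {Ω 𝒵 𝒲 𝒱 : Type*} [Fintype Ω] [Fintype 𝒵] [Fintype 𝒲] [Fintype 𝒱]
    [DecidableEq 𝒵] [DecidableEq 𝒲] [DecidableEq 𝒱]
    (p : Ω → ℝ) (hp : IsPMF p) (m : ℕ)
    (Z : ℕ → Ω → 𝒵) (W : Ω → 𝒲) (V : Ω → 𝒱)
    (hexch : ∀ j ≤ m, IdentDist p
      (fun ω => (Z j ω, (fun i : Fin j => Z i.val ω), V ω))
      (fun ω => (Z (j+1) ω, (fun i : Fin j => Z i.val ω), V ω)))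
    (hid : ∀ j ≤ m, IdentDist p (fun ω => (Z j ω, W ω)) (fun ω => (Z (j+1) ω, W ω)))
    (hci : ∀ j ≤ m + 1, CondIndep p (Z j)
      (fun ω => ((fun i : Fin j => Z i.val ω), V ω)) W) :
    (∀ j ≤ m,
      cmiOf p W (Z (j+1)) (fun ω => ((fun i : Fin (j+1) => Z i.val ω), V ω)) ≤
        cmiOf p W (Z j) (fun ω => ((fun i : Fin j => Z i.val ω), V ω))) ∧
    (m : ℝ) * cmiOf p W (Z m) (fun ω => ((fun i : Fin m => Z i.val ω), V ω)) ≤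
      cmiOf p W (fun ω => (fun i : Fin m => Z i.val ω)) V := by
  have hstep (j : ℕ) (hj : j ≤ m) :
      cmiOf p W (Z (j + 1)) (history Z V (j + 1)) ≤ cmiOf p W (Z j) (history Z V j) :=
    cmiOf_le_of_identDist_of_condIndep hp.1 snocHistory_injective (history_succ Z V j) (hexch j hj)
      (hid j hj) (hci j (by omega)) (hci (j + 1) (by omega))
  have hanti : AntitoneOn (fun j => cmiOf p W (Z j) (history Z V j)) (Set.Iic m) :=
    antitoneOn_of_succ_le Set.ordConnected_Iic fun j _ hj _ => hstep j hj
  refine ⟨hstep, ?_⟩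
  calc (m : ℝ) * cmiOf p W (Z m) (history Z V m)
      = #(range m) • cmiOf p W (Z m) (history Z V m) := by simp
    _ ≤ ∑ j ∈ range m, cmiOf p W (Z j) (history Z V j) :=
        card_nsmul_le_sum _ _ _ fun j hj =>
          hanti (mem_range.mp hj).le (le_refl m) (mem_range.mp hj).le
    _ = cmiOf p W (fun ω (i : Fin m) => Z i ω) V := (cmiOf_eq_sum_cmiOf_history p W Z V m).symm
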